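/- Let r₁, r₂, b₁, b₂, δ₁, δ₂, δ₃, δ₄ be positive reals with δ₁δ₂ < δ₃δ₄, and assume that either r₁ < (δ₁δ₂/(b₂(δ₃δ₄−δ₁δ₂)))^{1/δ₄} or r₂ < (δ₁δ₂/(b₁(δ₃δ₄−δ₁δ₂)))^{1/δ₃}. Then for every initial condition (x₀,y₀) ∈ [0,∞)² the orbit (x_{t+1},y_{t+1}) = T(x_t,y_t) of the competition map T converges, as t → ∞, to some fixed point of T. -/

import Mathlib

/-!
The map is competitive: each coordinate is increasing in itself and decreasing in the other, so
it preserves the southeast order, and every orbit step that is comparable in that order stays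
so from then on. The smallness condition on `r₁` makes the map reflect the componentwise order
on the strip `x ≤ r₁`, which every orbit enters after one step. Hence an orbit whose steps are
never southeast-comparable cannot switch from a joint descent to a joint ascent. In all cases both
coordinates are eventually monotone and bounded, so they converge, and by continuity the limit
is a fixed point.
-/

open Filter Topology Set

def EventuallyMonotoneOrAntitone (f : ℕ → ℝ) : Prop :=
  (∀ᶠ t in atTop, f t ≤ f (t + 1)) ∨ ∀ᶠ t in atTop, f (t + 1) ≤ f t

lemma eventually_atTop_of_forall_succ {p : ℕ → Prop} (h : ∀ t, p (t + 1)) :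
    ∀ᶠ t in atTop, p t :=
  eventually_atTop.2 ⟨1, fun t ht => by
    obtain ⟨s, rfl⟩ := Nat.exists_eq_add_of_le' ht
    exact h s⟩

lemma exists_tendsto_of_eventually_le_succ {f : ℕ → ℝ} {b : ℝ}
    (hf : ∀ᶠ t in atTop, f t ≤ f (t + 1)) (hb : ∀ᶠ t in atTop, f t ≤ b) :
    ∃ l, Tendsto f atTop (𝓝 l) := by
  obtain ⟨N, hN⟩ := eventually_atTop.1 (hf.and hb)
  have hmono : Monotone fun n => f (n + N) :=
    monotone_nat_of_le_succ fun n => by simpa [add_right_comm] using (hN (n + N) le_add_self).1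
  have hbdd : BddAbove (range fun n => f (n + N)) :=
    ⟨b, by rintro _ ⟨n, rfl⟩; exact (hN _ le_add_self).2⟩
  exact ⟨_, (tendsto_add_atTop_iff_nat N).1 (tendsto_atTop_ciSup hmono hbdd)⟩

lemma EventuallyMonotoneOrAntitone.exists_tendsto {f : ℕ → ℝ} {a b : ℝ}
    (hf : EventuallyMonotoneOrAntitone f) (ha : ∀ᶠ t in atTop, a ≤ f t)
    (hb : ∀ᶠ t in atTop, f t ≤ b) : ∃ l, Tendsto f atTop (𝓝 l) := by
  rcases hf with hf | hf
  · exact exists_tendsto_of_eventually_le_succ hf hb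
  · obtain ⟨l, hl⟩ := exists_tendsto_of_eventually_le_succ (f := -f) (b := -a)
      (hf.mono fun t ht => neg_le_neg ht) (ha.mono fun t ht => neg_le_neg ht)
    exact ⟨-l, by simpa using hl.neg⟩

section CompetitiveOrbit

variable {x y : ℕ → ℝ}

lemma eventually_le_succ_and_succ_le_of_competitive
    (hcomp : ∀ t, x t ≤ x (t + 1) → y (t + 1) ≤ y t →
      x (t + 1) ≤ x (t + 1 + 1) ∧ y (t + 1 + 1) ≤ y (t + 1))
    {t₀ : ℕ} (hx : x t₀ ≤ x (t₀ + 1)) (hy : y (t₀ + 1) ≤ y t₀) :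
    (∀ᶠ t in atTop, x t ≤ x (t + 1)) ∧ ∀ᶠ t in atTop, y (t + 1) ≤ y t := by
  have h : ∀ t ≥ t₀, x t ≤ x (t + 1) ∧ y (t + 1) ≤ y t := fun t ht =>
    Nat.le_induction ⟨hx, hy⟩ (fun n _ ih => hcomp n ih.1 ih.2) t ht
  exact ⟨eventually_atTop.2 ⟨t₀, fun t ht => (h t ht).1⟩,
    eventually_atTop.2 ⟨t₀, fun t ht => (h t ht).2⟩⟩

/-- `hxy` and `hyx` say that the map preserves the southeast order along the orbit, `hreflect`
that it eventually reflects the componentwise order. -/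
theorem EventuallyMonotoneOrAntitone.of_competitive
    (hxy : ∀ t, x t ≤ x (t + 1) → y (t + 1) ≤ y t →
      x (t + 1) ≤ x (t + 1 + 1) ∧ y (t + 1 + 1) ≤ y (t + 1))
    (hyx : ∀ t, y t ≤ y (t + 1) → x (t + 1) ≤ x t →
      y (t + 1) ≤ y (t + 1 + 1) ∧ x (t + 1 + 1) ≤ x (t + 1))
    (hreflect : ∀ᶠ t in atTop, x (t + 1) ≤ x (t + 1 + 1) → y (t + 1) ≤ y (t + 1 + 1) →
      x t ≤ x (t + 1) ∧ y t ≤ y (t + 1)) :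
    EventuallyMonotoneOrAntitone x ∧ EventuallyMonotoneOrAntitone y := by
  by_cases hSE : ∃ t, x t ≤ x (t + 1) ∧ y (t + 1) ≤ y t
  · obtain ⟨t₀, hx, hy⟩ := hSE
    obtain ⟨hx, hy⟩ := eventually_le_succ_and_succ_le_of_competitive hxy hx hy
    exact ⟨.inl hx, .inr hy⟩
  by_cases hNW : ∃ t, y t ≤ y (t + 1) ∧ x (t + 1) ≤ x t
  · obtain ⟨t₀, hy, hx⟩ := hNW
    obtain ⟨hy, hx⟩ := eventually_le_succ_and_succ_le_of_competitive hyx hy hx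
    exact ⟨.inr hx, .inl hy⟩
  push Not at hSE hNW
  obtain ⟨N, hN⟩ := eventually_atTop.1 hreflect
  by_cases hdown : ∃ t ≥ N, x (t + 1) < x t
  · obtain ⟨t₀, ht₀, hx₀⟩ := hdown
    have h : ∀ t ≥ t₀, x (t + 1) < x t := fun t ht => by
      induction t, ht using Nat.le_induction with
      | base => exact hx₀
      | succ n hn ih =>
        by_contra! hup
        exact (hN n (ht₀.trans hn) hup (hSE _ hup).le).1.not_gt ih
    refine ⟨.inr (eventually_atTop.2 ⟨t₀, fun t ht => (h t ht).le⟩),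
      .inr (eventually_atTop.2 ⟨t₀, fun t ht => ?_⟩)⟩
    by_contra! hy
    exact (hNW t hy.le).not_ge (h t ht).le
  · push Not at hdown
    have hx : ∀ t ≥ N, x t ≤ x (t + 1) := hdown
    exact ⟨.inl (eventually_atTop.2 ⟨N, hx⟩),
      .inl (eventually_atTop.2 ⟨N, fun t ht => (hSE t (hx t ht)).le⟩)⟩

end CompetitiveOrbit

lemma one_add_mul_lt_rpow_div_mul_one_add {m n R c : ℝ} (hm : 0 < m) (hmn : m < n) (hR : 1 < R)
    (hc : c * R * (n - m) < m) : 1 + c * R < R ^ (m / n) * (1 + c) := by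
  have hn : 0 < n := hm.trans hmn
  have hR₀ : 0 < R := by linarith
  set w := R ^ (1 - m / n)
  have hw : R ^ (m / n) * w = R := by
    rw [← Real.rpow_add hR₀, add_sub_cancel, Real.rpow_one]
  have hw₁ : 1 < w := Real.one_lt_rpow hR (by rw [sub_pos, div_lt_one hn]; exact hmn)
  have hbernoulli : n * w ≤ n + (n - m) * (R - 1) := by
    have := rpow_one_add_le_one_add_mul_self (s := R - 1) (by linarith) (p := 1 - m / n)
      (by rw [sub_nonneg, div_le_one hn]; exact hmn.le) (by linarith [div_pos hm hn])
    rw [add_sub_cancel] at this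
    calc n * w ≤ n * (1 + (1 - m / n) * (R - 1)) := mul_le_mul_of_nonneg_left this hn.le
      _ = n + (n - m) * (R - 1) := by field_simp
  have hkey : c * R * (w - 1) < R - w := by
    nlinarith [mul_lt_mul_of_pos_right hc (sub_pos.2 hw₁)]
  refine lt_of_mul_lt_mul_right ?_ (by linarith : 0 ≤ w)
  linear_combination hkey - (1 + c) * hw

noncomputable def bevertonHolt (r δ b δ' u v : ℝ) : ℝ :=
  r * u ^ δ / (1 + u ^ δ + b * v ^ δ')

section BevertonHolt

variable {r δ b δ' a u v u' v' : ℝ}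

lemma bevertonHolt_denom_pos (hb : 0 ≤ b) (hu : 0 ≤ u) (hv : 0 ≤ v) :
    0 < 1 + u ^ δ + b * v ^ δ' := by
  have := Real.rpow_nonneg hu δ
  have := mul_nonneg hb (Real.rpow_nonneg hv δ')
  linarith

lemma bevertonHolt_nonneg (hr : 0 ≤ r) (hb : 0 ≤ b) (hu : 0 ≤ u) (hv : 0 ≤ v) :
    0 ≤ bevertonHolt r δ b δ' u v :=
  div_nonneg (mul_nonneg hr (Real.rpow_nonneg hu δ)) (bevertonHolt_denom_pos hb hu hv).le

lemma bevertonHolt_pos (hr : 0 < r) (hb : 0 ≤ b) (hu : 0 < u) (hv : 0 ≤ v) :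
    0 < bevertonHolt r δ b δ' u v :=
  div_pos (mul_pos hr (Real.rpow_pos_of_pos hu δ)) (bevertonHolt_denom_pos hb hu.le hv)

lemma bevertonHolt_zero_left (hδ : 0 < δ) : bevertonHolt r δ b δ' 0 v = 0 := by
  rw [bevertonHolt, Real.zero_rpow hδ.ne', mul_zero, zero_div]

lemma bevertonHolt_le (hr : 0 ≤ r) (hb : 0 ≤ b) (hu : 0 ≤ u) (hv : 0 ≤ v) :
    bevertonHolt r δ b δ' u v ≤ r := by
  rw [bevertonHolt, div_le_iff₀ (bevertonHolt_denom_pos hb hu hv)]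
  have := Real.rpow_nonneg hu δ
  have := mul_nonneg hb (Real.rpow_nonneg hv δ')
  nlinarith

lemma bevertonHolt_le_bevertonHolt (hr : 0 ≤ r) (hb : 0 ≤ b) (hδ : 0 ≤ δ) (hδ' : 0 ≤ δ')
    (hu : 0 ≤ u) (huu : u ≤ u') (hv' : 0 ≤ v') (hvv : v' ≤ v) :
    bevertonHolt r δ b δ' u v ≤ bevertonHolt r δ b δ' u' v' := by
  have hU := Real.rpow_le_rpow hu huu hδ
  have hV := mul_le_mul_of_nonneg_left (Real.rpow_le_rpow hv' hvv hδ') hb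
  have := Real.rpow_nonneg hu δ
  have := mul_nonneg hb (Real.rpow_nonneg hv' δ')
  rw [bevertonHolt, bevertonHolt, div_le_div_iff₀ (bevertonHolt_denom_pos hb hu (hv'.trans hvv))
    (bevertonHolt_denom_pos hb (hu.trans huu) hv')]
  nlinarith [mul_le_mul hU hV (by positivity) (by linarith), mul_le_mul_of_nonneg_left hU hr]

lemma bevertonHolt_lt_bevertonHolt_left (hr : 0 < r) (hb : 0 ≤ b) (hδ : 0 < δ)
    (hu : 0 ≤ u) (huu : u < u') (hv : 0 ≤ v) :
    bevertonHolt r δ b δ' u v < bevertonHolt r δ b δ' u' v := by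
  have hU := Real.rpow_lt_rpow hu huu hδ
  have := Real.rpow_nonneg hu δ
  have hV := mul_nonneg hb (Real.rpow_nonneg hv δ')
  rw [bevertonHolt, bevertonHolt, div_lt_div_iff₀ (bevertonHolt_denom_pos hb hu hv)
    (bevertonHolt_denom_pos hb (hu.trans huu.le) hv)]
  nlinarith [mul_lt_mul_of_pos_left hU hr, mul_le_mul_of_nonneg_right hU.le hV]

lemma bevertonHolt_mul_le_bevertonHolt_iff (hr : 0 < r) (hb : 0 ≤ b) (ha : 0 ≤ a) (hu : 0 < u)
    (hv : 0 ≤ v) (hv' : 0 ≤ v') :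
    bevertonHolt r δ b δ' (a * u) v ≤ bevertonHolt r δ b δ' u v' ↔
      a ^ δ * (1 + b * v' ^ δ') ≤ 1 + b * v ^ δ' := by
  have hU := Real.rpow_pos_of_pos hu δ
  rw [bevertonHolt, bevertonHolt, div_le_div_iff₀ (bevertonHolt_denom_pos hb (by positivity) hv)
    (bevertonHolt_denom_pos hb hu.le hv'), Real.mul_rpow ha hu.le, ← sub_nonneg]
  have : r * u ^ δ * (1 + a ^ δ * u ^ δ + b * v ^ δ') -
      r * (a ^ δ * u ^ δ) * (1 + u ^ δ + b * v' ^ δ') =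
      r * u ^ δ * (1 + b * v ^ δ' - a ^ δ * (1 + b * v' ^ δ')) := by ring
  rw [this, mul_nonneg_iff_of_pos_left (by positivity), sub_nonneg]

lemma bevertonHolt_eq_of_tendsto (hb : 0 ≤ b) (hδ : 0 ≤ δ) (hδ' : 0 ≤ δ') {x y : ℕ → ℝ}
    {X Y : ℝ} (hX : Tendsto x atTop (𝓝 X)) (hY : Tendsto y atTop (𝓝 Y)) (hX₀ : 0 ≤ X)
    (hY₀ : 0 ≤ Y) (hx : ∀ t, x (t + 1) = bevertonHolt r δ b δ' (x t) (y t)) :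
    bevertonHolt r δ b δ' X Y = X := by
  have hT : Tendsto (fun t => bevertonHolt r δ b δ' (x t) (y t)) atTop
      (𝓝 (bevertonHolt r δ b δ' X Y)) :=
    ((hX.rpow_const (.inr hδ)).const_mul r).div
      ((tendsto_const_nhds.add (hX.rpow_const (.inr hδ))).add
        ((hY.rpow_const (.inr hδ')).const_mul b))
      (bevertonHolt_denom_pos hb hX₀ hY₀).ne'
  refine tendsto_nhds_unique ?_ ((tendsto_add_atTop_iff_nat 1).2 hX)
  simpa only [hx] using hT

end BevertonHolt

section Competition

variable {r₁ r₂ b₁ b₂ δ₁ δ₂ δ₃ δ₄ p₁ p₂ q₁ q₂ : ℝ}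

/- Write `p₁ = a q₁`, `p₂ = s q₂` with `a, s > 1`. The first component forces
`a ^ δ₁ < s ^ δ₃`, hence `s ^ δ₂ > R ^ k` for `R = a ^ δ₄`, `k = δ₁δ₂/(δ₃δ₄) < 1`; the second then
gives `R ^ k (1 + c) < 1 + c R` with `c R = b₂ p₁ ^ δ₄ ≤ b₂ r₁ ^ δ₄`, which the bound on `r₁`
excludes by `one_add_mul_lt_rpow_div_mul_one_add`. -/
lemma not_bevertonHolt_le_of_lt
    (hr₁ : 0 < r₁) (hr₂ : 0 < r₂) (hb₁ : 0 < b₁) (hb₂ : 0 < b₂)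
    (hδ₁ : 0 < δ₁) (hδ₂ : 0 < δ₂) (hδ₃ : 0 < δ₃) (hδ₄ : 0 < δ₄) (hδ : δ₁ * δ₂ < δ₃ * δ₄)
    (hr₁small : r₁ ^ δ₄ < δ₁ * δ₂ / (b₂ * (δ₃ * δ₄ - δ₁ * δ₂)))
    (hq₁ : 0 < q₁) (hq₂ : 0 < q₂) (h₁ : q₁ < p₁) (h₂ : q₂ < p₂) (hp₁ : p₁ ≤ r₁)
    (hF : bevertonHolt r₁ δ₁ b₁ δ₃ p₁ p₂ ≤ bevertonHolt r₁ δ₁ b₁ δ₃ q₁ q₂)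
    (hG : bevertonHolt r₂ δ₂ b₂ δ₄ p₂ p₁ ≤ bevertonHolt r₂ δ₂ b₂ δ₄ q₂ q₁) : False := by
  obtain ⟨a, ha, rfl⟩ : ∃ a, 1 < a ∧ p₁ = a * q₁ :=
    ⟨p₁ / q₁, (one_lt_div hq₁).2 h₁, (div_mul_cancel₀ p₁ hq₁.ne').symm⟩
  obtain ⟨s, hs, rfl⟩ : ∃ s, 1 < s ∧ p₂ = s * q₂ :=
    ⟨p₂ / q₂, (one_lt_div hq₂).2 h₂, (div_mul_cancel₀ p₂ hq₂.ne').symm⟩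
  rw [bevertonHolt_mul_le_bevertonHolt_iff hr₁ hb₁.le (by linarith) hq₁ (by positivity) hq₂.le,
    Real.mul_rpow (by linarith) hq₂.le] at hF
  rw [bevertonHolt_mul_le_bevertonHolt_iff hr₂ hb₂.le (by linarith) hq₂ (by positivity) hq₁.le,
    Real.mul_rpow (by linarith) hq₁.le] at hG
  have has : a ^ δ₁ < s ^ δ₃ := by
    have := Real.one_lt_rpow ha hδ₁
    have := mul_pos hb₁ (Real.rpow_pos_of_pos hq₂ δ₃)
    nlinarith
  have hsa : (a ^ δ₄) ^ (δ₁ * δ₂ / (δ₃ * δ₄)) < s ^ δ₂ := by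
    rw [← Real.rpow_mul (by positivity), show δ₄ * (δ₁ * δ₂ / (δ₃ * δ₄)) = δ₁ * (δ₂ / δ₃) by
      field_simp, Real.rpow_mul (by positivity)]
    calc _ < (s ^ δ₃) ^ (δ₂ / δ₃) := Real.rpow_lt_rpow (by positivity) has (by positivity)
      _ = s ^ δ₂ := by rw [← Real.rpow_mul (by positivity), mul_div_cancel₀ _ hδ₃.ne']
  have hc : b₂ * q₁ ^ δ₄ * a ^ δ₄ * (δ₃ * δ₄ - δ₁ * δ₂) < δ₁ * δ₂ := by
    have hd : 0 < δ₃ * δ₄ - δ₁ * δ₂ := sub_pos.2 hδ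
    have : b₂ * q₁ ^ δ₄ * a ^ δ₄ ≤ b₂ * r₁ ^ δ₄ := by
      rw [mul_assoc, ← Real.mul_rpow hq₁.le (by linarith), mul_comm q₁]
      gcongr
    calc _ ≤ b₂ * r₁ ^ δ₄ * (δ₃ * δ₄ - δ₁ * δ₂) := by gcongr
      _ < δ₁ * δ₂ := by linear_combination (lt_div_iff₀ (by positivity)).1 hr₁small
  have := one_add_mul_lt_rpow_div_mul_one_add (by positivity) hδ (Real.one_lt_rpow ha hδ₄) hc
  nlinarith [mul_lt_mul_of_pos_right hsa (by positivity : 0 < 1 + b₂ * q₁ ^ δ₄)]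

theorem le_and_le_of_bevertonHolt_le
    (hr₁ : 0 < r₁) (hr₂ : 0 < r₂) (hb₁ : 0 < b₁) (hb₂ : 0 < b₂)
    (hδ₁ : 0 < δ₁) (hδ₂ : 0 < δ₂) (hδ₃ : 0 < δ₃) (hδ₄ : 0 < δ₄) (hδ : δ₁ * δ₂ < δ₃ * δ₄)
    (hr₁small : r₁ ^ δ₄ < δ₁ * δ₂ / (b₂ * (δ₃ * δ₄ - δ₁ * δ₂)))
    (hp₁ : 0 ≤ p₁) (hp₂ : 0 ≤ p₂) (hq₁ : 0 ≤ q₁) (hq₂ : 0 ≤ q₂) (hp₁r : p₁ ≤ r₁)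
    (hF : bevertonHolt r₁ δ₁ b₁ δ₃ p₁ p₂ ≤ bevertonHolt r₁ δ₁ b₁ δ₃ q₁ q₂)
    (hG : bevertonHolt r₂ δ₂ b₂ δ₄ p₂ p₁ ≤ bevertonHolt r₂ δ₂ b₂ δ₄ q₂ q₁) :
    p₁ ≤ q₁ ∧ p₂ ≤ q₂ := by
  by_contra h
  have h₁ : q₁ < p₁ := by
    by_contra! h₁
    have h₂ : q₂ < p₂ := by by_contra! h₂; exact h ⟨h₁, h₂⟩
    refine hG.not_gt ((bevertonHolt_lt_bevertonHolt_left hr₂ hb₂.le hδ₂ hq₂ h₂ hq₁).trans_le ?_)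
    exact bevertonHolt_le_bevertonHolt hr₂.le hb₂.le hδ₂.le hδ₄.le hp₂ le_rfl hp₁ h₁
  have h₂ : q₂ < p₂ := by
    by_contra! h₂
    refine hF.not_gt ((bevertonHolt_lt_bevertonHolt_left hr₁ hb₁.le hδ₁ hq₁ h₁ hq₂).trans_le ?_)
    exact bevertonHolt_le_bevertonHolt hr₁.le hb₁.le hδ₁.le hδ₃.le hp₁ le_rfl hp₂ h₂
  rcases hq₁.eq_or_lt with rfl | hq₁
  · rw [bevertonHolt_zero_left hδ₁] at hF
    exact hF.not_gt (bevertonHolt_pos hr₁ hb₁.le h₁ hp₂)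
  rcases hq₂.eq_or_lt with rfl | hq₂
  · rw [bevertonHolt_zero_left hδ₂] at hG
    exact hG.not_gt (bevertonHolt_pos hr₂ hb₂.le h₂ hp₁)
  exact not_bevertonHolt_le_of_lt hr₁ hr₂ hb₁ hb₂ hδ₁ hδ₂ hδ₃ hδ₄ hδ hr₁small hq₁ hq₂ h₁ h₂ hp₁r
    hF hG

end Competition

section Orbit

variable {r₁ r₂ b₁ b₂ δ₁ δ₂ δ₃ δ₄ : ℝ} {x y : ℕ → ℝ}

lemma bevertonHolt_orbit_nonneg (hr₁ : 0 ≤ r₁) (hr₂ : 0 ≤ r₂) (hb₁ : 0 ≤ b₁) (hb₂ : 0 ≤ b₂)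
    (hx : ∀ t, x (t + 1) = bevertonHolt r₁ δ₁ b₁ δ₃ (x t) (y t))
    (hy : ∀ t, y (t + 1) = bevertonHolt r₂ δ₂ b₂ δ₄ (y t) (x t))
    (hx₀ : 0 ≤ x 0) (hy₀ : 0 ≤ y 0) : ∀ t, 0 ≤ x t ∧ 0 ≤ y t
  | 0 => ⟨hx₀, hy₀⟩
  | t + 1 => by
    obtain ⟨hxt, hyt⟩ := bevertonHolt_orbit_nonneg hr₁ hr₂ hb₁ hb₂ hx hy hx₀ hy₀ t
    rw [hx, hy]
    exact ⟨bevertonHolt_nonneg hr₁ hb₁ hxt hyt, bevertonHolt_nonneg hr₂ hb₂ hyt hxt⟩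

lemma bevertonHolt_orbit_competitive (hr₁ : 0 ≤ r₁) (hr₂ : 0 ≤ r₂) (hb₁ : 0 ≤ b₁) (hb₂ : 0 ≤ b₂)
    (hδ₁ : 0 ≤ δ₁) (hδ₂ : 0 ≤ δ₂) (hδ₃ : 0 ≤ δ₃) (hδ₄ : 0 ≤ δ₄)
    (hx : ∀ t, x (t + 1) = bevertonHolt r₁ δ₁ b₁ δ₃ (x t) (y t))
    (hy : ∀ t, y (t + 1) = bevertonHolt r₂ δ₂ b₂ δ₄ (y t) (x t))
    (hx₀ : ∀ t, 0 ≤ x t) (hy₀ : ∀ t, 0 ≤ y t) (t : ℕ) (h₁ : x t ≤ x (t + 1))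
    (h₂ : y (t + 1) ≤ y t) : x (t + 1) ≤ x (t + 1 + 1) ∧ y (t + 1 + 1) ≤ y (t + 1) := by
  constructor
  · rw [hx t, hx (t + 1)]
    exact bevertonHolt_le_bevertonHolt hr₁ hb₁ hδ₁ hδ₃ (hx₀ t) h₁ (hy₀ _) h₂
  · rw [hy t, hy (t + 1)]
    exact bevertonHolt_le_bevertonHolt hr₂ hb₂ hδ₂ hδ₄ (hy₀ _) h₂ (hx₀ t) h₁

theorem bevertonHolt_orbit_exists_tendsto
    (hr₁ : 0 < r₁) (hr₂ : 0 < r₂) (hb₁ : 0 < b₁) (hb₂ : 0 < b₂)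
    (hδ₁ : 0 < δ₁) (hδ₂ : 0 < δ₂) (hδ₃ : 0 < δ₃) (hδ₄ : 0 < δ₄) (hδ : δ₁ * δ₂ < δ₃ * δ₄)
    (hs : r₁ < (δ₁ * δ₂ / (b₂ * (δ₃ * δ₄ - δ₁ * δ₂))) ^ (1 / δ₄))
    (hx : ∀ t, x (t + 1) = bevertonHolt r₁ δ₁ b₁ δ₃ (x t) (y t))
    (hy : ∀ t, y (t + 1) = bevertonHolt r₂ δ₂ b₂ δ₄ (y t) (x t))
    (hx₀ : ∀ t, 0 ≤ x t) (hy₀ : ∀ t, 0 ≤ y t) :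
    (∃ X, Tendsto x atTop (𝓝 X)) ∧ ∃ Y, Tendsto y atTop (𝓝 Y) := by
  have hr₁small : r₁ ^ δ₄ < δ₁ * δ₂ / (b₂ * (δ₃ * δ₄ - δ₁ * δ₂)) := by
    have : 0 ≤ δ₁ * δ₂ / (b₂ * (δ₃ * δ₄ - δ₁ * δ₂)) :=
      div_nonneg (by positivity) (mul_nonneg hb₂.le (sub_pos.2 hδ).le)
    rwa [one_div, Real.lt_rpow_inv_iff_of_pos hr₁.le this hδ₄] at hs
  have hxr : ∀ t, x (t + 1) ≤ r₁ := fun t =>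
    (hx t).trans_le (bevertonHolt_le hr₁.le hb₁.le (hx₀ t) (hy₀ t))
  have hyr : ∀ t, y (t + 1) ≤ r₂ := fun t =>
    (hy t).trans_le (bevertonHolt_le hr₂.le hb₂.le (hy₀ t) (hx₀ t))
  have hreflect : ∀ t, x (t + 1 + 1) ≤ x (t + 1 + 1 + 1) → y (t + 1 + 1) ≤ y (t + 1 + 1 + 1) →
      x (t + 1) ≤ x (t + 1 + 1) ∧ y (t + 1) ≤ y (t + 1 + 1) := fun t h₁ h₂ =>
    le_and_le_of_bevertonHolt_le hr₁ hr₂ hb₁ hb₂ hδ₁ hδ₂ hδ₃ hδ₄ hδ hr₁small (hx₀ _) (hy₀ _)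
      (hx₀ _) (hy₀ _) (hxr t) ((hx (t + 1)).symm.trans_le (h₁.trans_eq (hx (t + 1 + 1))))
      ((hy (t + 1)).symm.trans_le (h₂.trans_eq (hy (t + 1 + 1))))
  have hmono := EventuallyMonotoneOrAntitone.of_competitive
    (bevertonHolt_orbit_competitive hr₁.le hr₂.le hb₁.le hb₂.le hδ₁.le hδ₂.le hδ₃.le hδ₄.le
      hx hy hx₀ hy₀)
    (bevertonHolt_orbit_competitive hr₂.le hr₁.le hb₂.le hb₁.le hδ₂.le hδ₁.le hδ₄.le hδ₃.le
      hy hx hy₀ hx₀)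
    (eventually_atTop_of_forall_succ hreflect)
  exact ⟨hmono.1.exists_tendsto (.of_forall hx₀) (eventually_atTop_of_forall_succ hxr),
    hmono.2.exists_tendsto (.of_forall hy₀) (eventually_atTop_of_forall_succ hyr)⟩

end Orbit

/-- If `δ₁δ₂ < δ₃δ₄` and one of the growth rates is small enough, every orbit
of the competition map `T` starting in `[0,∞)²` converges to a fixed point. -/
theorem stmt_12 (r₁ r₂ b₁ b₂ δ₁ δ₂ δ₃ δ₄ : ℝ)
    (hr₁ : 0 < r₁) (hr₂ : 0 < r₂) (hb₁ : 0 < b₁) (hb₂ : 0 < b₂)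
    (hδ₁ : 0 < δ₁) (hδ₂ : 0 < δ₂) (hδ₃ : 0 < δ₃) (hδ₄ : 0 < δ₄)
    (hδ : δ₁ * δ₂ < δ₃ * δ₄)
    (hsmall :
      r₁ < (δ₁ * δ₂ / (b₂ * (δ₃ * δ₄ - δ₁ * δ₂))) ^ (1 / δ₄) ∨
      r₂ < (δ₁ * δ₂ / (b₁ * (δ₃ * δ₄ - δ₁ * δ₂))) ^ (1 / δ₃))
    (T : ℝ × ℝ → ℝ × ℝ)
    (hT : ∀ x y : ℝ, T (x, y) =
      (r₁ * x ^ δ₁ / (1 + x ^ δ₁ + b₁ * y ^ δ₃),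
       r₂ * y ^ δ₂ / (1 + y ^ δ₂ + b₂ * x ^ δ₄))) :
    ∀ x y : ℕ → ℝ, 0 ≤ x 0 → 0 ≤ y 0 →
      (∀ t : ℕ, (x (t + 1), y (t + 1)) = T (x t, y t)) →
      ∃ p : ℝ × ℝ, T p = p ∧
        Filter.Tendsto (fun t : ℕ => (x t, y t)) Filter.atTop (nhds p) := by
  intro x y hx₀ hy₀ hstep
  have hx : ∀ t, x (t + 1) = bevertonHolt r₁ δ₁ b₁ δ₃ (x t) (y t) := fun t =>
    congrArg Prod.fst ((hstep t).trans (hT _ _))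
  have hy : ∀ t, y (t + 1) = bevertonHolt r₂ δ₂ b₂ δ₄ (y t) (x t) := fun t =>
    congrArg Prod.snd ((hstep t).trans (hT _ _))
  have hnn := bevertonHolt_orbit_nonneg hr₁.le hr₂.le hb₁.le hb₂.le hx hy hx₀ hy₀
  obtain ⟨⟨X, hX⟩, Y, hY⟩ : (∃ X, Tendsto x atTop (𝓝 X)) ∧ ∃ Y, Tendsto y atTop (𝓝 Y) := by
    rcases hsmall with hs | hs
    · exact bevertonHolt_orbit_exists_tendsto hr₁ hr₂ hb₁ hb₂ hδ₁ hδ₂ hδ₃ hδ₄ hδ hs hx hy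
        (fun t => (hnn t).1) (fun t => (hnn t).2)
    · rw [mul_comm δ₁, mul_comm δ₃] at hs hδ
      exact (bevertonHolt_orbit_exists_tendsto hr₂ hr₁ hb₂ hb₁ hδ₂ hδ₁ hδ₄ hδ₃ hδ hs hy hx
        (fun t => (hnn t).2) (fun t => (hnn t).1)).symm
  have hX₀ : 0 ≤ X := ge_of_tendsto' hX fun t => (hnn t).1
  have hY₀ : 0 ≤ Y := ge_of_tendsto' hY fun t => (hnn t).2
  refine ⟨(X, Y), ?_, hX.prodMk_nhds hY⟩
  rw [hT]
  exact Prod.ext (bevertonHolt_eq_of_tendsto hb₁.le hδ₁.le hδ₃.le hX hY hX₀ hY₀ hx)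
    (bevertonHolt_eq_of_tendsto hb₂.le hδ₂.le hδ₄.le hY hX hY₀ hX₀ hy)
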